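/- For every integer m ≥ 1, −(1/12)·( −((4m+1)/m)·(1/(4m+1)² − 1/2) − m/(4m+1) + 3 + 12·𝐬(m,4m+1) ) = (2m² − 18m + 1)/(24m). -/

import Mathlib

/-!
Write `n = 4m + 1` and split `1 ≤ i ≤ 4m` as `i = 4j + k + 1` with `0 ≤ j < m`, `0 ≤ k < 4`.
Since `(4j + k + 1)·m = j·n + ((k + 1)m − j)` and `0 < (k + 1)m − j < n`, both sawtooth factors
are explicit affine functions of `j`, so `𝐬(m, n)` is a sum of quadratic polynomials in `j`;
summing gives `𝐬(m, 4m + 1) = m(4 − m) / (3(4m + 1))`, and the formula follows by algebra.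
-/

open Classical in
/-- The sawtooth function `((x))`: `x - ⌊x⌋ - 1/2` if `x` is not an integer, `0` otherwise. -/
noncomputable def sawtooth (x : ℝ) : ℝ :=
  if ∃ n : ℤ, x = (n : ℝ) then 0 else x - ⌊x⌋ - 1 / 2

/-- The Dedekind sum `𝐬(q,p) = Σ_{i=1}^{p-1} ((i/p))·((iq/p))`. -/
noncomputable def dedekindSum (q p : ℤ) : ℝ :=
  ∑ i ∈ Finset.Icc (1 : ℤ) (p - 1), sawtooth ((i : ℝ) / (p : ℝ)) * sawtooth ((i : ℝ) * (q : ℝ) / (p : ℝ))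

open Finset

lemma sawtooth_eq_fract_sub_half {x : ℝ} (hx : Int.fract x ≠ 0) :
    sawtooth x = Int.fract x - 1 / 2 := by
  have hx' : ¬ ∃ n : ℤ, x = n := by
    rintro ⟨n, rfl⟩
    exact hx (Int.fract_intCast n)
  rw [sawtooth, if_neg hx', Int.fract]

lemma sawtooth_intCast_div_natCast {a : ℤ} {n : ℕ} (hn : 0 < n) (ha : a % n ≠ 0) :
    sawtooth (a / n) = (a % n : ℤ) / n - 1 / 2 := by
  have hfract : Int.fract ((a : ℝ) / n) = (a % n : ℤ) / n :=
    Int.fract_div_intCast_eq_div_intCast_mod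
  have hne : Int.fract ((a : ℝ) / n) ≠ 0 := by
    rw [hfract]
    exact div_ne_zero (by exact_mod_cast ha) (by positivity)
  rw [sawtooth_eq_fract_sub_half hne, hfract]

lemma dedekindSum_natCast (q : ℤ) (p : ℕ) :
    dedekindSum q p =
      ∑ t ∈ range (p - 1), sawtooth ((t + 1 : ℝ) / p) * sawtooth ((t + 1 : ℝ) * q / p) := by
  rw [dedekindSum]
  symm
  apply sum_nbij' (fun t : ℕ => (t : ℤ) + 1) (fun i => (i - 1).toNat)
  · intro t ht
    simp only [mem_range] at ht
    simp only [mem_Icc]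
    omega
  · intro i hi
    simp only [mem_Icc] at hi
    simp only [mem_range]
    omega
  · intro t _
    omega
  · intro i hi
    simp only [mem_Icc] at hi
    omega
  · intro t _
    push_cast
    rfl

lemma sum_range_mul {M : Type*} [AddCommMonoid M] (f : ℕ → M) (b m : ℕ) :
    ∑ t ∈ range (b * m), f t = ∑ j ∈ range m, ∑ k ∈ range b, f (b * j + k) := by
  induction m with
  | zero => simp
  | succ m ih => rw [Nat.mul_succ, sum_range_add, ih, sum_range_succ]

lemma sum_range_quadratic (a b c : ℝ) (N : ℕ) :
    ∑ j ∈ range N, (a * j ^ 2 + b * j + c) =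
      a * (N * (N - 1) * (2 * N - 1) / 6) + b * (N * (N - 1) / 2) + c * N := by
  induction N with
  | zero => simp
  | succ N ih => rw [sum_range_succ, ih]; push_cast; ring

lemma sawtooth_mul_sawtooth_four_mul_add {m j k : ℕ} (hj : j < m) (hk : k < 4) :
    sawtooth ((4 * j + k + 1 : ℝ) / (4 * m + 1)) *
        sawtooth ((4 * j + k + 1 : ℝ) * m / (4 * m + 1)) =
      ((4 * j + k + 1 : ℝ) / (4 * m + 1) - 1 / 2) *
        (((k + 1) * m - j : ℝ) / (4 * m + 1) - 1 / 2) := by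
  have hi : (4 * j + k + 1 : ℤ) % ((4 * m + 1 : ℕ) : ℤ) = 4 * j + k + 1 :=
    Int.emod_eq_of_lt (by omega) (by omega)
  have him : ((4 * j + k + 1) * m : ℤ) % ((4 * m + 1 : ℕ) : ℤ) = (k + 1) * m - j := by
    rw [show ((4 * j + k + 1) * m : ℤ) = ((k + 1) * m - j) + j * ((4 * m + 1 : ℕ) : ℤ) by
        push_cast; ring,
      Int.add_mul_emod_self_right, Int.emod_eq_of_lt (by nlinarith) (by push_cast; nlinarith)]
  have e1 := sawtooth_intCast_div_natCast (a := 4 * j + k + 1) (n := 4 * m + 1) (by omega)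
    (by rw [hi]; omega)
  have e2 := sawtooth_intCast_div_natCast (a := (4 * j + k + 1) * m) (n := 4 * m + 1) (by omega)
    (by rw [him]; nlinarith)
  rw [hi] at e1
  rw [him] at e2
  push_cast at e1 e2
  rw [e1, e2]

theorem dedekindSum_four_mul_add_one (m : ℕ) :
    dedekindSum m (4 * m + 1) = m * (4 - m) / (3 * (4 * m + 1)) := by
  rw [show (4 * (m : ℤ) + 1) = ((4 * m + 1 : ℕ) : ℤ) by push_cast; ring, dedekindSum_natCast,
    Nat.add_sub_cancel, sum_range_mul]
  push_cast
  have block : ∀ j ∈ range m, ∑ k ∈ range 4,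
      sawtooth ((4 * j + k + 1 : ℝ) / (4 * m + 1)) *
        sawtooth ((4 * j + k + 1 : ℝ) * m / (4 * m + 1)) =
      -16 / (4 * m + 1) ^ 2 * j ^ 2 + ((40 * m - 10) / (4 * m + 1) - 6) / (4 * m + 1) * j
        + (30 * m / (4 * m + 1) ^ 2 - 5 * (1 + m) / (4 * m + 1) + 1) := by
    intro j hj
    rw [sum_congr rfl fun k hk =>
      sawtooth_mul_sawtooth_four_mul_add (mem_range.1 hj) (mem_range.1 hk)]
    simp only [sum_range_succ, sum_range_zero]
    push_cast
    field_simp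
    ring
  rw [sum_congr rfl block, sum_range_quadratic]
  field_simp
  ring

/-- Lescop's formula for the Casson–Walker invariant `λ(−P(4m+1,m))`:
`−(1/12)·(−((4m+1)/m)·(1/(4m+1)² − 1/2) − m/(4m+1) + 3 + 12·𝐬(m,4m+1)) = (2m² − 18m + 1)/(24m)`. -/
theorem stmt_4 (m : ℤ) (hm : 1 ≤ m) :
    -(1 / 12) * (-((4 * (m : ℝ) + 1) / (m : ℝ)) * (1 / (4 * (m : ℝ) + 1) ^ 2 - 1 / 2)
        - (m : ℝ) / (4 * (m : ℝ) + 1) + 3 + 12 * dedekindSum m (4 * m + 1)) =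
      (2 * (m : ℝ) ^ 2 - 18 * (m : ℝ) + 1) / (24 * (m : ℝ)) := by
  lift m to ℕ using (by omega)
  have hm' : (m : ℝ) ≠ 0 := by norm_cast; omega
  rw [dedekindSum_four_mul_add_one]
  push_cast
  field_simp
  ring
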